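/- arXiv:1905.01570 — 2 statements merged into one kernel-verified Lean document; each statement's English description precedes it below -/
import Mathlib

section
/- Let $c$ and $c'$ be positive integers with $n$-th Macaulay decompositions, and define $c_{<n>} = \binom{k_n - 1}{n} + \cdots + \binom{k_\delta - 1}{\delta}$ where $\binom{k_n}{n} + \cdots + \binom{k_\delta}{\delta}$ is the $n$-th Macaulay decomposition of $c$. If $c' \leq c$ then $c'_{<n>} \leq c_{<n>}$; that is, the map $c \mapsto c_{<n>}$ is non-decreasing. -/
/-- The `n`-th Macaulay decomposition of a positive integer `c`:
`c = C(k n, n) + ⋯ + C(k δ, δ)` with `k n > ⋯ > k δ ≥ δ > 0`. -/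
def IsMacaulayDecomp (n c δ : ℕ) (k : ℕ → ℕ) : Prop :=
  0 < δ ∧ δ ≤ n ∧ δ ≤ k δ ∧
  (∀ i, δ ≤ i → i < n → k i < k (i + 1)) ∧
  c = ∑ i ∈ Finset.Icc δ n, (k i).choose i

/-- `c_{<n>} = C(k n - 1, n) + ⋯ + C(k δ - 1, δ)`. -/
def macaulayLower (n δ : ℕ) (k : ℕ → ℕ) : ℕ :=
  ∑ i ∈ Finset.Icc δ n, (k i - 1).choose i

/-- Strictly increasing sequences grow at least linearly. -/
lemma mac_add_le (δ n : ℕ) (m : ℕ → ℕ)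
    (hmono : ∀ i, δ ≤ i → i < n → m i < m (i + 1)) :
    ∀ d i, δ ≤ i → i + d ≤ n → m i + d ≤ m (i + d) := by
  intro d
  induction d with
  | zero => intro i _ _; simp
  | succ d ih =>
    intro i hi hin
    have h1 : m i + d ≤ m (i + d) := ih i hi (by omega)
    have h2 : m (i + d) < m (i + d + 1) := hmono (i + d) (by omega) (by omega)
    have h3 : m (i + (d + 1)) = m (i + d + 1) := rfl
    omega

lemma mac_k_ge (δ n : ℕ) (k : ℕ → ℕ) (hkδ : δ ≤ k δ)
    (hmono : ∀ i, δ ≤ i → i < n → k i < k (i + 1)) :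
    ∀ i, δ ≤ i → i ≤ n → i ≤ k i := by
  intro i hi hin
  have := mac_add_le δ n k hmono (i - δ) δ le_rfl (by omega)
  have hiδ : δ + (i - δ) = i := by omega
  rw [hiδ] at this
  omega

/-- Key bound: a sum of binomials along a strictly increasing sequence is
less than the "next" binomial, provided the top index is large enough. -/
lemma mac_sum_lt (δ : ℕ) (h0 : 0 < δ) (m : ℕ → ℕ) :
    ∀ n, δ ≤ n → (∀ i, δ ≤ i → i < n → m i < m (i + 1)) → n ≤ m n + 1 →
      ∑ i ∈ Finset.Icc δ n, (m i).choose i < (m n + 1).choose n := by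
  intro n
  induction n with
  | zero => omega
  | succ n ih =>
    intro hδ hmono htop
    rcases eq_or_lt_of_le hδ with h | h
    · -- δ = n + 1 : single term
      subst h
      rw [Finset.Icc_self, Finset.sum_singleton]
      rw [Nat.choose_succ_succ]
      have h1 : 0 < (m (n + 1)).choose n := Nat.choose_pos (by omega)
      simp only [Nat.succ_eq_add_one]
      omega
    · -- δ ≤ n
      have hδn : δ ≤ n := by omega
      rw [Finset.sum_Icc_succ_top hδ]
      have hmono' : ∀ i, δ ≤ i → i < n → m i < m (i + 1) := by
        intro i hi hin; exact hmono i hi (by omega)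
      have htop1 : n ≤ m (n + 1) := by omega
      have hpos : 0 < (m (n + 1)).choose n := Nat.choose_pos htop1
      have htail : ∑ i ∈ Finset.Icc δ n, (m i).choose i < (m (n + 1)).choose n := by
        by_cases hc : n ≤ m n + 1
        · have := ih hδn hmono' hc
          have hmn : m n + 1 ≤ m (n + 1) := hmono n hδn (by omega)
          calc ∑ i ∈ Finset.Icc δ n, (m i).choose i
              < (m n + 1).choose n := this
            _ ≤ (m (n + 1)).choose n := Nat.choose_le_choose n hmn
        · -- m n + 1 < n : all terms vanish
          have hz : ∀ i ∈ Finset.Icc δ n, (m i).choose i = 0 := by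
            intro i hi
            rw [Finset.mem_Icc] at hi
            have := mac_add_le δ (n + 1) m hmono (n - i) i hi.1 (by omega)
            have heq : i + (n - i) = n := by omega
            rw [heq] at this
            exact Nat.choose_eq_zero_of_lt (by omega)
          rw [Finset.sum_eq_zero hz]
          exact hpos
      have hfin : (m (n + 1)).choose n + (m (n + 1)).choose (n + 1)
          = (m (n + 1) + 1).choose (n + 1) := (Nat.choose_succ_succ _ _).symm
      omega

/-- Main induction. -/
lemma macaulayLower_mono_aux :
    ∀ n c c' δ δ' (k k' : ℕ → ℕ),
      IsMacaulayDecomp n c δ k → IsMacaulayDecomp n c' δ' k' → c' ≤ c →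
      macaulayLower n δ' k' ≤ macaulayLower n δ k := by
  intro n
  induction n with
  | zero =>
    intro c c' δ δ' k k' h _ _
    obtain ⟨h1, h2, -⟩ := h
    omega
  | succ n ih =>
    intro c c' δ δ' k k' h h' hle
    obtain ⟨hδ0, hδn, hkδ, hk, hc⟩ := h
    obtain ⟨hδ0', hδn', hkδ', hk', hc'⟩ := h'
    have hkge : ∀ i, δ ≤ i → i ≤ n + 1 → i ≤ k i := mac_k_ge δ (n + 1) k hkδ hk
    have hkge' : ∀ i, δ' ≤ i → i ≤ n + 1 → i ≤ k' i := mac_k_ge δ' (n + 1) k' hkδ' hk'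
    have hktop : n + 1 ≤ k (n + 1) := hkge (n + 1) hδn le_rfl
    have hktop' : n + 1 ≤ k' (n + 1) := hkge' (n + 1) hδn' le_rfl
    -- c < C(k(n+1)+1, n+1)
    have hcb : c < (k (n + 1) + 1).choose (n + 1) := by
      rw [hc]; exact mac_sum_lt δ hδ0 k (n + 1) hδn hk (by omega)
    -- C(k'(n+1), n+1) ≤ c'
    have hclb : (k' (n + 1)).choose (n + 1) ≤ c' := by
      rw [hc']
      exact Finset.single_le_sum (f := fun i => (k' i).choose i)
        (fun i _ => Nat.zero_le _) (Finset.mem_Icc.mpr ⟨hδn', le_rfl⟩)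
    have hkk : k' (n + 1) ≤ k (n + 1) := by
      by_contra hcon
      have : k (n + 1) + 1 ≤ k' (n + 1) := by omega
      have := Nat.choose_le_choose (n + 1) this
      omega
    have hlow : (k (n + 1) - 1).choose (n + 1) ≤ macaulayLower (n + 1) δ k := by
      exact Finset.single_le_sum (f := fun i => (k i - 1).choose i)
        (fun i _ => Nat.zero_le _) (Finset.mem_Icc.mpr ⟨hδn, le_rfl⟩)
    rcases lt_or_eq_of_le hkk with hlt | heq
    · -- k'(n+1) < k(n+1) : bound the whole lowered sum
      have hmono1 : ∀ i, δ' ≤ i → i < n + 1 → k' i - 1 < k' (i + 1) - 1 := by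
        intro i hi hin
        have h1 : i ≤ k' i := hkge' i hi (by omega)
        have h2 : k' i < k' (i + 1) := hk' i hi hin
        omega
      have hsum : macaulayLower (n + 1) δ' k'
          < (k' (n + 1) - 1 + 1).choose (n + 1) :=
        mac_sum_lt δ' hδ0' (fun i => k' i - 1) (n + 1) hδn' hmono1
          (by show n + 1 ≤ k' (n + 1) - 1 + 1; omega)
      have heq1 : k' (n + 1) - 1 + 1 = k' (n + 1) := by omega
      rw [heq1] at hsum
      have hle2 : (k' (n + 1)).choose (n + 1) ≤ (k (n + 1) - 1).choose (n + 1) :=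
        Nat.choose_le_choose (n + 1) (by omega)
      refine le_of_lt ?_
      calc macaulayLower (n + 1) δ' k'
          < (k' (n + 1)).choose (n + 1) := hsum
        _ ≤ (k (n + 1) - 1).choose (n + 1) := hle2
        _ ≤ macaulayLower (n + 1) δ k := hlow
    · -- k'(n+1) = k(n+1)
      rcases eq_or_lt_of_le hδn' with hδ'eq | hδ'lt
      · -- δ' = n+1 : lowered c' is a single term
        have : macaulayLower (n + 1) δ' k' = (k' (n + 1) - 1).choose (n + 1) := by
          rw [macaulayLower, ← hδ'eq, Finset.Icc_self, Finset.sum_singleton, hδ'eq]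
        rw [this, heq]
        exact hlow
      · have hδ'n : δ' ≤ n := by omega
        rcases eq_or_lt_of_le hδn with hδeq | hδlt
        · -- δ = n+1 but δ' ≤ n : then c' > c, contradiction
          exfalso
          have hcval : c = (k (n + 1)).choose (n + 1) := by
            rw [hc, ← hδeq, Finset.Icc_self, Finset.sum_singleton, hδeq]
          have hc'val : c' = (∑ i ∈ Finset.Icc δ' n, (k' i).choose i)
              + (k' (n + 1)).choose (n + 1) := by
            rw [hc', Finset.sum_Icc_succ_top (by omega)]
          rw [heq] at hc'val
          have hpos : 0 < (k' δ').choose δ' := Nat.choose_pos (hkge' δ' le_rfl (by omega))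
          have : (k' δ').choose δ' ≤ ∑ i ∈ Finset.Icc δ' n, (k' i).choose i :=
            Finset.single_le_sum (f := fun i => (k' i).choose i)
              (fun i _ => Nat.zero_le _) (Finset.mem_Icc.mpr ⟨le_rfl, hδ'n⟩)
          omega
        · -- both δ, δ' ≤ n : use induction hypothesis
          have hδln : δ ≤ n := by omega
          have hrest : IsMacaulayDecomp n (∑ i ∈ Finset.Icc δ n, (k i).choose i) δ k :=
            ⟨hδ0, hδln, hkδ, fun i hi hin => hk i hi (by omega), rfl⟩
          have hrest' : IsMacaulayDecomp n (∑ i ∈ Finset.Icc δ' n, (k' i).choose i) δ' k' :=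
            ⟨hδ0', hδ'n, hkδ', fun i hi hin => hk' i hi (by omega), rfl⟩
          have hcsplit : c = (∑ i ∈ Finset.Icc δ n, (k i).choose i)
              + (k (n + 1)).choose (n + 1) := by
            rw [hc, Finset.sum_Icc_succ_top (by omega)]
          have hc'split : c' = (∑ i ∈ Finset.Icc δ' n, (k' i).choose i)
              + (k' (n + 1)).choose (n + 1) := by
            rw [hc', Finset.sum_Icc_succ_top (by omega)]
          have hrle : (∑ i ∈ Finset.Icc δ' n, (k' i).choose i)
              ≤ ∑ i ∈ Finset.Icc δ n, (k i).choose i := by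
            rw [heq] at hc'split
            omega
          have hih := ih _ _ δ δ' k k' hrest hrest' hrle
          have hl1 : macaulayLower (n + 1) δ k
              = macaulayLower n δ k + (k (n + 1) - 1).choose (n + 1) := by
            unfold macaulayLower
            rw [Finset.sum_Icc_succ_top (by omega)]
          have hl2 : macaulayLower (n + 1) δ' k'
              = macaulayLower n δ' k' + (k' (n + 1) - 1).choose (n + 1) := by
            unfold macaulayLower
            rw [Finset.sum_Icc_succ_top (by omega)]
          rw [hl1, hl2, heq]
          omega

/-- The map `c ↦ c_{<n>}` is non-decreasing. -/
theorem macaulayLower_mono (n c c' δ δ' : ℕ) (k k' : ℕ → ℕ)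
    (h : IsMacaulayDecomp n c δ k) (h' : IsMacaulayDecomp n c' δ' k')
    (hle : c' ≤ c) :
    macaulayLower n δ' k' ≤ macaulayLower n δ k :=
  macaulayLower_mono_aux n c c' δ δ' k k' h h' hle
end

section
/- Define $c^{<n>} = \binom{k_n + 1}{n+1} + \cdots + \binom{k_\delta + 1}{\delta + 1}$ where $c = \binom{k_n}{n} + \cdots + \binom{k_\delta}{\delta}$ is the $n$-th Macaulay decomposition of $c$. Then for positive integers $c' \leq c$, one has $(c')^{<n>} \leq c^{<n>}$; moreover $(c+1)^{<n>} = c^{<n>} + k_1 + 1$ if $\delta = 1$, and $(c+1)^{<n>} = c^{<n>} + 1$ if $\delta > 1$. -/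
/-- `c^{<n>} = C(k n + 1, n + 1) + ⋯ + C(k δ + 1, δ + 1)`. -/
def macaulayUpper (n δ : ℕ) (k : ℕ → ℕ) : ℕ :=
  ∑ i ∈ Finset.Icc δ n, (k i + 1).choose (i + 1)

lemma chain_ge {n δ : ℕ} {k : ℕ → ℕ} (hδk : δ ≤ k δ)
    (hmono : ∀ i, δ ≤ i → i < n → k i < k (i + 1)) :
    ∀ i, δ ≤ i → i ≤ n → i ≤ k i := by
  intro i
  induction i with
  | zero => omega
  | succ m ih =>
    intro h1 h2
    rcases Nat.eq_or_lt_of_le h1 with h | h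
    · subst h; exact hδk
    · have h3 : δ ≤ m := by omega
      have := ih h3 (by omega)
      have := hmono m h3 (by omega)
      omega

lemma sum_lt {δ : ℕ} {k : ℕ → ℕ} (hδ : 0 < δ) {n : ℕ} (hn : δ ≤ n)
    (hδk : δ ≤ k δ) (hmono : ∀ i, δ ≤ i → i < n → k i < k (i + 1)) :
    ∑ i ∈ Finset.Icc δ n, (k i).choose i < (k n + 1).choose n := by
  induction n, hn using Nat.le_induction with
  | base =>
    rw [Finset.Icc_self, Finset.sum_singleton]
    obtain ⟨d, rfl⟩ : ∃ d, δ = d + 1 := ⟨δ - 1, by omega⟩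
    rw [Nat.choose_succ_succ]
    simp only [Nat.succ_eq_add_one]
    have : 0 < (k (d+1)).choose d := Nat.choose_pos (by omega)
    omega
  | succ n hn ih =>
    have hkn : k n + 1 ≤ k (n + 1) := hmono n hn (by omega)
    have h1 := ih (fun i h1 h2 => hmono i h1 (by omega))
    rw [Finset.sum_Icc_succ_top (by omega)]
    calc ∑ i ∈ Finset.Icc δ n, (k i).choose i + (k (n+1)).choose (n+1)
        < (k n + 1).choose n + (k (n+1)).choose (n+1) := by omega
      _ ≤ (k (n+1)).choose n + (k (n+1)).choose (n+1) :=
          Nat.add_le_add_right (Nat.choose_le_choose n hkn) _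
      _ = (k (n+1) + 1).choose (n+1) := (Nat.choose_succ_succ _ _).symm

lemma upper_lt {δ : ℕ} {k : ℕ → ℕ} {n : ℕ} (hn : δ ≤ n)
    (hδk : δ ≤ k δ) (hmono : ∀ i, δ ≤ i → i < n → k i < k (i + 1)) :
    macaulayUpper n δ k < (k n + 2).choose (n + 1) := by
  unfold macaulayUpper
  induction n, hn using Nat.le_induction with
  | base =>
    rw [Finset.Icc_self, Finset.sum_singleton]
    have : (k δ + 2).choose (δ+1) = (k δ + 1).choose δ + (k δ + 1).choose (δ+1) :=
      Nat.choose_succ_succ _ _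
    have : 0 < (k δ + 1).choose δ := Nat.choose_pos (by omega)
    omega
  | succ n hn ih =>
    have hkn : k n + 1 ≤ k (n + 1) := hmono n hn (by omega)
    have h1 := ih (fun i h1 h2 => hmono i h1 (by omega))
    rw [Finset.sum_Icc_succ_top (by omega)]
    have h2 : (k (n+1) + 1).choose (n+1+1) + (k (n+1) + 1).choose (n+1) =
        (k (n+1) + 2).choose (n+1+1) := by
      rw [add_comm]; exact (Nat.choose_succ_succ _ _).symm
    have h3 : (k n + 2).choose (n+1) ≤ (k (n+1) + 1).choose (n+1) :=
      Nat.choose_le_choose _ (by omega)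
    omega

lemma macaulay_mono : ∀ n c c' δ δ' (k k' : ℕ → ℕ),
    IsMacaulayDecomp n c δ k → IsMacaulayDecomp n c' δ' k' → c' ≤ c →
    macaulayUpper n δ' k' ≤ macaulayUpper n δ k := by
  intro n
  induction n using Nat.strong_induction_on with
  | _ n ih =>
    intro c c' δ δ' k k' h h' hle
    obtain ⟨hδ, hδn, hδk, hmono, hc⟩ := h
    obtain ⟨hδ', hδn', hδk', hmono', hc'⟩ := h'
    have hkc : (k n).choose n ≤ c := hc ▸ Finset.single_le_sum
      (f := fun i => (k i).choose i) (fun i _ => Nat.zero_le _)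
      (Finset.mem_Icc.mpr ⟨hδn, le_refl n⟩)
    have hkc' : (k' n).choose n ≤ c' := hc' ▸ Finset.single_le_sum
      (f := fun i => (k' i).choose i) (fun i _ => Nat.zero_le _)
      (Finset.mem_Icc.mpr ⟨hδn', le_refl n⟩)
    have hcb : c < (k n + 1).choose n := hc ▸ sum_lt hδ hδn hδk hmono
    have hcb' : c' < (k' n + 1).choose n := hc' ▸ sum_lt hδ' hδn' hδk' hmono'
    have hub : macaulayUpper n δ k < (k n + 2).choose (n + 1) := upper_lt hδn hδk hmono
    have hub' : macaulayUpper n δ' k' < (k' n + 2).choose (n + 1) := upper_lt hδn' hδk' hmono'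
    have hukc : (k n + 1).choose (n+1) ≤ macaulayUpper n δ k := Finset.single_le_sum
      (f := fun i => (k i + 1).choose (i+1)) (fun i _ => Nat.zero_le _)
      (Finset.mem_Icc.mpr ⟨hδn, le_refl n⟩)
    have hukc' : (k' n + 1).choose (n+1) ≤ macaulayUpper n δ' k' := Finset.single_le_sum
      (f := fun i => (k' i + 1).choose (i+1)) (fun i _ => Nat.zero_le _)
      (Finset.mem_Icc.mpr ⟨hδn', le_refl n⟩)
    rcases lt_trichotomy (k' n) (k n) with hlt | heq | hgt
    · -- k' n < k n : strictly smaller top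
      have h1 : (k' n + 2).choose (n+1) ≤ (k n + 1).choose (n+1) :=
        Nat.choose_le_choose _ (by omega)
      omega
    · -- equal tops
      by_cases hδen : δ = n
      · by_cases hδen' : δ' = n
        · have hA : macaulayUpper n δ k = (k n + 1).choose (n+1) := by
            unfold macaulayUpper; rw [hδen, Finset.Icc_self, Finset.sum_singleton]
          have hB : macaulayUpper n δ' k' = (k' n + 1).choose (n+1) := by
            unfold macaulayUpper; rw [hδen', Finset.Icc_self, Finset.sum_singleton]
          rw [heq] at hB
          omega
        · exfalso
          have hceq : c = (k n).choose n := by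
            rw [hc, hδen, Finset.Icc_self, Finset.sum_singleton]
          have hδ'lt : δ' < n := by omega
          obtain ⟨m, hmn⟩ : ∃ m, n = m + 1 := ⟨n - 1, by omega⟩
          have hsplit : c' = ∑ i ∈ Finset.Icc δ' m, (k' i).choose i +
              (k' (m+1)).choose (m+1) := by
            rw [hc', hmn, Finset.sum_Icc_succ_top (by omega)]
          have hm : m ≤ k' m := chain_ge hδk' hmono' m (by omega) (by omega)
          have hpos : 0 < (k' m).choose m := Nat.choose_pos hm
          have hles : (k' m).choose m ≤ ∑ i ∈ Finset.Icc δ' m, (k' i).choose i :=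
            Finset.single_le_sum (f := fun i => (k' i).choose i) (fun i _ => Nat.zero_le _)
              (Finset.mem_Icc.mpr ⟨by omega, le_refl m⟩)
          rw [hmn] at hceq heq
          rw [heq] at hsplit
          omega
      · -- δ < n
        have hδltn : δ < n := by omega
        obtain ⟨m, rfl⟩ : ∃ m, n = m + 1 := ⟨n - 1, by omega⟩
        by_cases hδen' : δ' = m + 1
        · have hB : macaulayUpper (m+1) δ' k' = (k' (m+1) + 1).choose (m+1+1) := by
            unfold macaulayUpper; rw [hδen', Finset.Icc_self, Finset.sum_singleton]
          rw [hB, heq]; exact hukc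
        · -- both have lower parts; recurse
          have hδ'lt : δ' ≤ m := by omega
          set r := ∑ i ∈ Finset.Icc δ m, (k i).choose i with hr
          set r' := ∑ i ∈ Finset.Icc δ' m, (k' i).choose i with hr'
          have hcsplit : c = r + (k (m+1)).choose (m+1) := by
            rw [hc, Finset.sum_Icc_succ_top (by omega)]
          have hcsplit' : c' = r' + (k' (m+1)).choose (m+1) := by
            rw [hc', Finset.sum_Icc_succ_top (by omega)]
          have hd : IsMacaulayDecomp m r δ k :=
            ⟨hδ, by omega, hδk, fun i h1 h2 => hmono i h1 (by omega), rfl⟩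
          have hd' : IsMacaulayDecomp m r' δ' k' :=
            ⟨hδ', by omega, hδk', fun i h1 h2 => hmono' i h1 (by omega), rfl⟩
          have hrle : r' ≤ r := by rw [heq] at hcsplit'; omega
          have hrec := ih m (by omega) r r' δ δ' k k' hd hd' hrle
          have hu1 : macaulayUpper (m+1) δ k =
              macaulayUpper m δ k + (k (m+1) + 1).choose (m+1+1) := by
            unfold macaulayUpper; rw [Finset.sum_Icc_succ_top (by omega)]
          have hu2 : macaulayUpper (m+1) δ' k' =
              macaulayUpper m δ' k' + (k' (m+1) + 1).choose (m+1+1) := by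
            unfold macaulayUpper; rw [Finset.sum_Icc_succ_top (by omega)]
          rw [heq] at hu2
          omega
    · -- k n < k' n : c < c', contradiction
      exfalso
      have h1 : (k n + 1).choose n ≤ (k' n).choose n := Nat.choose_le_choose _ (by omega)
      omega

lemma macaulay_upper_unique {n c δ δ' : ℕ} {k k' : ℕ → ℕ}
    (h : IsMacaulayDecomp n c δ k) (h' : IsMacaulayDecomp n c δ' k') :
    macaulayUpper n δ k = macaulayUpper n δ' k' :=
  le_antisymm (macaulay_mono n c c δ' δ k' k h' h le_rfl)
    (macaulay_mono n c c δ δ' k k' h h' le_rfl)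

lemma hockey {k : ℕ → ℕ} : ∀ {j : ℕ}, 1 ≤ j →
    (∀ i, 1 ≤ i → i < j → k (i + 1) = k i + 1) →
    (1 + ∑ i ∈ Finset.Icc 1 j, (k i).choose i = (k j + 1).choose j) ∧
    (∑ i ∈ Finset.Icc 1 j, (k i + 1).choose (i + 1) + (k 1 + 1) = (k j + 2).choose (j + 1)) := by
  intro j hj
  induction j, hj using Nat.le_induction with
  | base =>
    intro _
    rw [Finset.Icc_self, Finset.sum_singleton, Finset.sum_singleton]
    constructor
    · rw [Nat.choose_one_right, Nat.choose_one_right]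
      omega
    · have h1 : (k 1 + 2).choose 2 = (k 1 + 1).choose 1 + (k 1 + 1).choose 2 :=
        Nat.choose_succ_succ _ _
      have h2 : (k 1 + 1).choose (1 + 1) = (k 1 + 1).choose 2 := rfl
      rw [h2, h1, Nat.choose_one_right]
      omega
  | succ j hj ih =>
    intro hrun
    obtain ⟨ih1, ih2⟩ := ih (fun i h1 h2 => hrun i h1 (by omega))
    have hkj : k (j + 1) = k j + 1 := hrun j hj (by omega)
    rw [Finset.sum_Icc_succ_top (by omega), Finset.sum_Icc_succ_top (by omega), hkj]
    constructor
    · have h0 : (k j + 2).choose (j + 1) = (k j + 1).choose j + (k j + 1).choose (j + 1) :=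
        Nat.choose_succ_succ _ _
      have h1 : (k j + 1 + 1).choose (j + 1) = (k j + 2).choose (j + 1) := rfl
      omega
    · have h1 : (k j + 3).choose (j + 2) = (k j + 2).choose (j + 1) + (k j + 2).choose (j + 2) :=
        Nat.choose_succ_succ _ _
      have h2 : k j + 1 + 2 = k j + 3 := rfl
      have h3 : j + 1 + 1 = j + 2 := rfl
      rw [h2, h3, h1]
      have h4 : k j + 1 + 1 = k j + 2 := rfl
      rw [h4]
      omega

lemma split_bottom {n d : ℕ} (hd : d ≤ n) (f : ℕ → ℕ) :
    ∑ i ∈ Finset.Icc d n, f i = f d + ∑ i ∈ Finset.Icc (d+1) n, f i := by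
  rw [show Finset.Icc d n = insert d (Finset.Icc (d+1) n) by
    rw [Finset.Icc_add_one_left_eq_Ioc, Finset.Ioc_insert_left hd]]
  rw [Finset.sum_insert (by simp)]

/-- Explicit decomposition of `c+1` when `δ > 1`. -/
lemma succ_decomp_big {n c δ : ℕ} {k : ℕ → ℕ} (h : IsMacaulayDecomp n c δ k) (hδ1 : 1 < δ) :
    ∃ K, IsMacaulayDecomp n (c+1) (δ-1) K ∧
      macaulayUpper n (δ-1) K = macaulayUpper n δ k + 1 := by
  obtain ⟨hδ, hδn, hδk, hmono, hc⟩ := h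
  obtain ⟨d, rfl⟩ : ∃ d, δ = d + 1 := ⟨δ - 1, by omega⟩
  simp only [Nat.add_sub_cancel]
  set K : ℕ → ℕ := fun i => if i = d then d else k i with hK
  have hKd : K d = d := by simp [hK]
  have hKi : ∀ i, d + 1 ≤ i → K i = k i := fun i hi => by
    simp only [hK]; rw [if_neg (by omega)]
  refine ⟨K, ⟨by omega, by omega, by rw [hKd], ?_, ?_⟩, ?_⟩
  · intro i h1 h2
    rcases eq_or_lt_of_le h1 with h3 | h3
    · rw [← h3, hKd, hKi (d+1) le_rfl]
      omega
    · rw [hKi i (by omega), hKi (i+1) (by omega)]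
      exact hmono i (by omega) h2
  · rw [split_bottom (by omega) (fun i => (K i).choose i)]
    rw [Finset.sum_congr rfl (fun i hi => by
      rw [hKi i (Finset.mem_Icc.mp hi).1])]
    rw [hKd, Nat.choose_self]
    omega
  · unfold macaulayUpper
    rw [split_bottom (by omega) (fun i => (K i + 1).choose (i+1))]
    rw [Finset.sum_congr rfl (fun i hi => by
      rw [hKi i (Finset.mem_Icc.mp hi).1])]
    rw [hKd, Nat.choose_self]
    omega

/-- Explicit decomposition of `c+1` when `δ = 1`. -/
lemma succ_decomp_one {n c : ℕ} {k : ℕ → ℕ} (h : IsMacaulayDecomp n c 1 k) :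
    ∃ j K, IsMacaulayDecomp n (c+1) j K ∧
      macaulayUpper n j K = macaulayUpper n 1 k + (k 1 + 1) := by
  obtain ⟨hδ, hδn, hδk, hmono, hc⟩ := h
  have hex : ∃ m, 1 ≤ m ∧ (m = n ∨ k m + 1 < k (m + 1)) := ⟨n, hδn, Or.inl rfl⟩
  classical
  set j := Nat.find hex with hj
  obtain ⟨hj1, hjP⟩ : 1 ≤ j ∧ (j = n ∨ k j + 1 < k (j + 1)) := Nat.find_spec hex
  have hjn : j ≤ n := Nat.find_le ⟨hδn, Or.inl rfl⟩
  have hrun : ∀ i, 1 ≤ i → i < j → k (i + 1) = k i + 1 := by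
    intro i h1 h2
    have hni := Nat.find_min hex h2
    push_neg at hni
    obtain ⟨hne, hle⟩ := hni h1
    have := hmono i h1 (by omega)
    omega
  obtain ⟨hh1, hh2⟩ := hockey (k := k) hj1 hrun
  set K : ℕ → ℕ := fun i => if i = j then k j + 1 else k i with hK
  have hKj : K j = k j + 1 := by simp [hK]
  have hKi : ∀ i, j + 1 ≤ i → K i = k i := fun i hi => by
    simp only [hK]; rw [if_neg (by omega)]
  have hkjj : j ≤ k j := chain_ge hδk hmono j hj1 hjn
  refine ⟨j, K, ⟨by omega, hjn, by omega, ?_, ?_⟩, ?_⟩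
  · intro i h1 h2
    rcases eq_or_lt_of_le h1 with h3 | h3
    · rw [← h3, hKj, hKi (j+1) le_rfl]
      rcases hjP with h4 | h4
      · omega
      · omega
    · rw [hKi i (by omega), hKi (i+1) (by omega)]
      exact hmono i (by omega) h2
  · -- c + 1 = ∑ i ∈ Icc j n, (K i).choose i
    rw [split_bottom hjn (fun i => (K i).choose i)]
    rw [Finset.sum_congr rfl (fun i hi => by
      rw [hKi i (Finset.mem_Icc.mp hi).1])]
    rw [hKj]
    have hcsplit : c = ∑ i ∈ Finset.Icc 1 j, (k i).choose i +
        ∑ i ∈ Finset.Icc (j+1) n, (k i).choose i := by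
      rw [hc]
      rw [show Finset.Icc 1 j = Finset.Ioc 0 j from Finset.Icc_add_one_left_eq_Ioc 0 j,
        show Finset.Icc (j+1) n = Finset.Ioc j n from Finset.Icc_add_one_left_eq_Ioc j n,
        show Finset.Icc 1 n = Finset.Ioc 0 n from Finset.Icc_add_one_left_eq_Ioc 0 n,
        Finset.sum_Ioc_consecutive _ (by omega) hjn]
    omega
  · -- upper value
    unfold macaulayUpper
    rw [split_bottom hjn (fun i => (K i + 1).choose (i+1))]
    rw [Finset.sum_congr rfl (fun i hi => by
      rw [hKi i (Finset.mem_Icc.mp hi).1])]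
    rw [hKj]
    have husplit : ∑ i ∈ Finset.Icc 1 n, (k i + 1).choose (i+1) =
        ∑ i ∈ Finset.Icc 1 j, (k i + 1).choose (i+1) +
        ∑ i ∈ Finset.Icc (j+1) n, (k i + 1).choose (i+1) := by
      rw [show Finset.Icc 1 j = Finset.Ioc 0 j from Finset.Icc_add_one_left_eq_Ioc 0 j,
        show Finset.Icc (j+1) n = Finset.Ioc j n from Finset.Icc_add_one_left_eq_Ioc j n,
        show Finset.Icc 1 n = Finset.Ioc 0 n from Finset.Icc_add_one_left_eq_Ioc 0 n,
        Finset.sum_Ioc_consecutive _ (by omega) hjn]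
    have h5 : (k j + 1 + 1).choose (j + 1) = (k j + 2).choose (j + 1) := rfl
    omega

/-- The map `c ↦ c^{<n>}` is non-decreasing, and
`(c+1)^{<n>} = c^{<n>} + k 1 + 1` if `δ = 1`, while
`(c+1)^{<n>} = c^{<n>} + 1` if `δ > 1`. -/
theorem macaulayUpper_props (n c c' δ δ' δ'' : ℕ) (k k' k'' : ℕ → ℕ)
    (h : IsMacaulayDecomp n c δ k) (h' : IsMacaulayDecomp n c' δ' k')
    (h'' : IsMacaulayDecomp n (c + 1) δ'' k'') :
    (c' ≤ c → macaulayUpper n δ' k' ≤ macaulayUpper n δ k) ∧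
    (δ = 1 → macaulayUpper n δ'' k'' = macaulayUpper n δ k + k 1 + 1) ∧
    (1 < δ → macaulayUpper n δ'' k'' = macaulayUpper n δ k + 1) := by
  refine ⟨fun hle => macaulay_mono n c c' δ δ' k k' h h' hle, ?_, ?_⟩
  · intro hδ1
    subst hδ1
    obtain ⟨j, K, hd, he⟩ := succ_decomp_one h
    rw [macaulay_upper_unique h'' hd, he]
    omega
  · intro hδ1
    obtain ⟨K, hd, he⟩ := succ_decomp_big h hδ1
    rw [macaulay_upper_unique h'' hd, he]
end
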